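/- Let R be a discrete valuation ring and let T be a commutative R-algebra which is free of rank two as an R-module with basis {1, z} (so z satisfies a monic quadratic equation over R). Let E be a T-module which, as an R-module, is free of rank two with basis x, y, and write z·x = a x + b y and z·y = c x + d y with a, b, c, d ∈ R. Then the kernel of the canonical homomorphism of graded R-algebras Sym_R(E) → Sym_T(E) is the ideal generated by the single quadratic element c·x² + (d − a)·x·y − b·y² (where x, y denote the images of x, y in degree one of Sym_R(E)). -/

import Mathlib

/-!
Through the basis `x, y`, `Sym_R(E)` is `R[X₀, X₁]`, and `Sym_T(E)` maps to `T[X₀, X₁] ⧸ I` with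
`I = (z X₀ - ℓ₀, z X₁ - ℓ₁)`, `ℓ₀ = a X₀ + b X₁`, `ℓ₁ = c X₀ + d X₁`, because `x ↦ X₀, y ↦ X₁`
is `T`-linear into that quotient. So an element `u` of the kernel satisfies
`u = t₀ (z X₀ - ℓ₀) + t₁ (z X₁ - ℓ₁)` in `T[X₀, X₁]`. Write `tᵢ = fᵢ + z gᵢ` with
`fᵢ, gᵢ ∈ R[X₀, X₁]` and reduce with `z² = q + p z`. The `z`-component is a linear relation
between `X₀` and `X₁`; as `X₀, X₁` is a regular sequence it determines `f₀, f₁` up to a multiple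
`s` of the Koszul syzygy. Substituting into the `1`-component, and using that the matrix of `z` on
`E` satisfies the same equation `A² = q + p A`, leaves `u = s (X₀ ℓ₁ - X₁ ℓ₀)`, the quadric.
Conversely the quadric is `x (z y) - (z x) y`, which vanishes in `Sym_T(E)`.
-/

open TensorAlgebra

/-- The relation on the tensor algebra used to define the symmetric algebra. -/
inductive SymRel (R M : Type*) [CommRing R] [AddCommGroup M] [Module R M] :
    TensorAlgebra R M → TensorAlgebra R M → Prop
  | mul_comm (x y : M) : SymRel R M (ι R x * ι R y) (ι R y * ι R x)

/-- The symmetric algebra `Sym_R(M)` of a module `M` over a commutative ring `R`. -/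
abbrev SymmAlg (R M : Type*) [CommRing R] [AddCommGroup M] [Module R M] :=
  RingQuot (_root_.SymRel R M)

/-- The canonical `R`-linear map `M → Sym_R(M)` (inclusion of degree one). -/
noncomputable def symι (R M : Type*) [CommRing R] [AddCommGroup M] [Module R M] :
    M →ₗ[R] SymmAlg R M :=
  (RingQuot.mkAlgHom R (_root_.SymRel R M)).toLinearMap ∘ₗ ι R

variable (R T E : Type*) [CommRing R] [CommRing T] [Algebra R T]
  [AddCommGroup E] [Module T E] [Module R E] [IsScalarTower R T E]

/-- The canonical morphism of graded `R`-algebras `Sym_R(E) → Sym_T(E)` induced, via the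
universal property of the symmetric algebra, by the `R`-linear map `E → Sym_T(E)`. -/
noncomputable def symMap : SymmAlg R E →ₐ[R] SymmAlg T E :=
  RingQuot.liftAlgHom R ⟨TensorAlgebra.lift R ((symι T E).restrictScalars R), by
    rintro x y ⟨a, b⟩
    simp only [map_mul, TensorAlgebra.lift_ι_apply]
    have h := RingQuot.mkAlgHom_rel T (_root_.SymRel.mul_comm (R := T) (M := E) a b)
    simpa only [map_mul, symι, LinearMap.restrictScalars_apply, LinearMap.coe_comp,
      Function.comp_apply, AlgHom.toLinearMap_apply] using h⟩

namespace SymmAlg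

variable {R} {M : Type*} [AddCommGroup M] [Module R M]

theorem commute_mkAlgHom (x y : TensorAlgebra R M) :
    Commute (RingQuot.mkAlgHom R (_root_.SymRel R M) x)
      (RingQuot.mkAlgHom R (_root_.SymRel R M) y) := by
  induction x using TensorAlgebra.induction with
  | algebraMap r => rw [AlgHom.commutes]; exact Algebra.commute_algebraMap_left r _
  | mul x₁ x₂ h₁ h₂ => rw [map_mul]; exact h₁.mul_left h₂
  | add x₁ x₂ h₁ h₂ => rw [map_add]; exact h₁.add_left h₂
  | ι m =>
    induction y using TensorAlgebra.induction with
    | algebraMap r => rw [AlgHom.commutes]; exact Algebra.commute_algebraMap_right r _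
    | mul y₁ y₂ h₁ h₂ => rw [map_mul]; exact h₁.mul_right h₂
    | add y₁ y₂ h₁ h₂ => rw [map_add]; exact h₁.add_right h₂
    | ι m' =>
      simpa only [Commute, SemiconjBy, map_mul] using
        RingQuot.mkAlgHom_rel R (_root_.SymRel.mul_comm m m')

noncomputable instance : CommRing (SymmAlg R M) where
  mul_comm u v := by
    obtain ⟨x, rfl⟩ := RingQuot.mkAlgHom_surjective R (_root_.SymRel R M) u
    obtain ⟨y, rfl⟩ := RingQuot.mkAlgHom_surjective R (_root_.SymRel R M) v
    exact commute_mkAlgHom x y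

variable {B : Type*} [CommRing B] [Algebra R B]

noncomputable def lift (f : M →ₗ[R] B) : SymmAlg R M →ₐ[R] B :=
  RingQuot.liftAlgHom R ⟨TensorAlgebra.lift R f, by
    rintro _ _ ⟨u, v⟩
    simp only [map_mul, TensorAlgebra.lift_ι_apply]
    exact mul_comm _ _⟩

@[simp]
theorem lift_symι (f : M →ₗ[R] B) (v : M) : lift f (symι R M v) = f v := by
  simp [lift, symι, RingQuot.liftAlgHom_mkAlgHom_apply]

theorem algHom_ext {f g : SymmAlg R M →ₐ[R] B}
    (h : f.toLinearMap ∘ₗ symι R M = g.toLinearMap ∘ₗ symι R M) : f = g :=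
  RingQuot.ringQuot_ext' _ _ _ <| TensorAlgebra.hom_ext h

noncomputable def equivMvPolynomial {ι : Type*} (b : Module.Basis ι R M) :
    SymmAlg R M ≃ₐ[R] MvPolynomial ι R :=
  .ofAlgHom (lift (b.constr R MvPolynomial.X)) (MvPolynomial.aeval fun i ↦ symι R M (b i))
    (MvPolynomial.algHom_ext fun i ↦ by simp) (algHom_ext <| b.ext fun i ↦ by simp)

@[simp]
theorem equivMvPolynomial_symm_X {ι : Type*} (b : Module.Basis ι R M) (i : ι) :
    (equivMvPolynomial b).symm (MvPolynomial.X i) = symι R M (b i) :=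
  MvPolynomial.aeval_X _ i

@[simp]
theorem equivMvPolynomial_symm_C {ι : Type*} (b : Module.Basis ι R M) (r : R) :
    (equivMvPolynomial b).symm (MvPolynomial.C r) = algebraMap R (SymmAlg R M) r :=
  (equivMvPolynomial b).symm.commutes r

end SymmAlg

section

variable {R T E}

@[simp]
theorem symMap_symι (v : E) : symMap R T E (symι R E v) = symι T E v := by
  simp [symMap, symι, RingQuot.liftAlgHom_mkAlgHom_apply]

theorem symι_smul_mul_symι (t : T) (x y : E) :
    symι T E (t • x) * symι T E y = symι T E x * symι T E (t • y) := by
  rw [map_smul, map_smul, smul_mul_assoc, mul_smul_comm]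

theorem symMap_quadric_eq_zero {z : T} {x y : E} {a b c d : R}
    (hzx : z • x = a • x + b • y) (hzy : z • y = c • x + d • y) :
    symMap R T E (c • (symι R E x * symι R E x) + (d - a) • (symι R E x * symι R E y) -
      b • (symι R E y * symι R E y)) = 0 := by
  have h := symι_smul_mul_symι z x y
  rw [hzx, hzy] at h
  simp only [map_sub, map_add, map_mul, symMap_symι, LinearMap.map_smul_of_tower,
    Algebra.smul_def, AlgHom.commutes] at h ⊢
  linear_combination -h

end

namespace MvPolynomial

variable {R} {σ : Type*} {i j : σ} {v w : MvPolynomial σ R}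

theorem X_dvd_of_mul_X_eq_mul_X (hij : i ≠ j) (h : v * X i = w * X j) : X j ∣ v := by
  classical
  rw [X_dvd_iff_modMonomial_eq_zero]
  ext n
  by_cases hn : Finsupp.single j 1 ≤ n
  · exact coeff_modMonomial_of_le _ hn
  · have hnj : n j = 0 := by simpa [Finsupp.single_le_iff] using hn
    rw [coeff_modMonomial_of_not_le _ hn, coeff_zero, ← coeff_mul_X n i v, h, coeff_mul_X',
      if_neg (by simp [hnj, hij])]

theorem exists_eq_mul_X_of_mul_X_eq_mul_X (hij : i ≠ j) (h : v * X i = w * X j) :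
    ∃ s : MvPolynomial σ R, v = s * X j ∧ w = s * X i := by
  obtain ⟨s, rfl⟩ := X_dvd_of_mul_X_eq_mul_X hij h
  refine ⟨s, mul_comm _ _, ?_⟩
  have h' : s * X i * X j = w * X j := by rw [← h]; ring
  exact (X_mul_cancel_right_iff.mp h').symm

end MvPolynomial

section BasisOneZ

open MvPolynomial

variable {R T} {bT : Module.Basis (Fin 2) R T} {z : T}

theorem eq_algebraMap_add_algebraMap_mul (hbT0 : bT 0 = 1) (hbT1 : bT 1 = z) (t : T) :
    t = algebraMap R T (bT.repr t 0) + algebraMap R T (bT.repr t 1) * z := by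
  conv_lhs => rw [← bT.sum_repr t]
  rw [Fin.sum_univ_two, hbT0, hbT1, Algebra.smul_def, Algebra.smul_def, mul_one]

theorem eq_zero_of_algebraMap_add_algebraMap_mul_eq_zero (hbT0 : bT 0 = 1) (hbT1 : bT 1 = z)
    {r s : R} (h : algebraMap R T r + algebraMap R T s * z = 0) : r = 0 ∧ s = 0 := by
  have h' : bT.repr (r • bT 0 + s • bT 1) = 0 := by
    rw [hbT0, hbT1, Algebra.smul_def, Algebra.smul_def, mul_one, h, map_zero]
  simpa [Finsupp.ext_iff, Fin.forall_fin_two, Finsupp.single_apply] using h'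

variable {M N : Type*} [AddCommGroup M] [Module T M] [Module R M] [IsScalarTower R T M]
  [AddCommGroup N] [Module T N] [Module R N] [IsScalarTower R T N]

def LinearMap.extendScalarsOfCommute (hbT0 : bT 0 = 1) (hbT1 : bT 1 = z) (f : M →ₗ[R] N)
    (hf : ∀ v, f (z • v) = z • f v) : M →ₗ[T] N where
  toFun := f
  map_add' := f.map_add
  map_smul' t v := by
    rw [eq_algebraMap_add_algebraMap_mul hbT0 hbT1 t]
    simp only [add_smul, mul_smul, algebraMap_smul, map_add, map_smul, hf, RingHom.id_apply]

variable {σ : Type*}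

theorem MvPolynomial.exists_eq_map_add_C_mul_map (hbT0 : bT 0 = 1) (hbT1 : bT 1 = z)
    (w : MvPolynomial σ T) :
    ∃ e f : MvPolynomial σ R, w = map (algebraMap R T) e + C z * map (algebraMap R T) f := by
  induction w using MvPolynomial.induction_on with
  | C t =>
    refine ⟨C (bT.repr t 0), C (bT.repr t 1), ?_⟩
    conv_lhs => rw [eq_algebraMap_add_algebraMap_mul hbT0 hbT1 t]
    simp only [map_C, map_add, map_mul]
    ring
  | add p q hp hq =>
    obtain ⟨e₁, f₁, rfl⟩ := hp
    obtain ⟨e₂, f₂, rfl⟩ := hq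
    exact ⟨e₁ + e₂, f₁ + f₂, by simp only [map_add]; ring⟩
  | mul_X p i hp =>
    obtain ⟨e, f, rfl⟩ := hp
    exact ⟨e * X i, f * X i, by simp only [map_mul, map_X]; ring⟩

theorem MvPolynomial.eq_zero_of_map_add_C_mul_map_eq_zero (hbT0 : bT 0 = 1) (hbT1 : bT 1 = z)
    {e f : MvPolynomial σ R}
    (h : map (algebraMap R T) e + C z * map (algebraMap R T) f = 0) : e = 0 ∧ f = 0 := by
  have hcoeff (n : σ →₀ ℕ) := eq_zero_of_algebraMap_add_algebraMap_mul_eq_zero hbT0 hbT1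
    (by simpa only [coeff_add, coeff_C_mul, coeff_map, coeff_zero, mul_comm z] using
      congrArg (coeff n) h)
  exact ⟨ext _ _ fun n ↦ (hcoeff n).1, ext _ _ fun n ↦ (hcoeff n).2⟩

end BasisOneZ

section Presentation

open MvPolynomial

variable {R T}

variable (R) in
noncomputable def presentationIdeal (z : T) (a b c d : R) : Ideal (MvPolynomial (Fin 2) T) :=
  Ideal.span {C z * X 0 - map (algebraMap R T) (C a * X 0 + C b * X 1),
    C z * X 1 - map (algebraMap R T) (C c * X 0 + C d * X 1)}

theorem MvPolynomial.smul_mk_X_of_sub_mem {J : Ideal (MvPolynomial (Fin 2) T)} {t : T} {r s : R}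
    {i : Fin 2} (h : C t * X i - map (algebraMap R T) (C r * X 0 + C s * X 1) ∈ J) :
    t • Ideal.Quotient.mk J (X i) =
      r • Ideal.Quotient.mk J (X 0) + s • Ideal.Quotient.mk J (X 1) := by
  have smul_mk (t' : T) (p : MvPolynomial (Fin 2) T) :
      t' • Ideal.Quotient.mk J p = Ideal.Quotient.mk J (C t' * p) := by
    rw [← smul_eq_C_mul]; rfl
  rw [← sub_eq_zero, ← algebraMap_smul T r, ← algebraMap_smul T s, smul_mk, smul_mk, smul_mk,
    ← map_add, ← map_sub, Ideal.Quotient.eq_zero_iff_mem]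
  simpa only [map_add, map_mul, map_C, map_X] using h

theorem exists_components_of_map_mem_presentationIdeal {bT : Module.Basis (Fin 2) R T} {z : T}
    (hbT0 : bT 0 = 1) (hbT1 : bT 1 = z) {p q a b c d : R}
    (hz : z * z = algebraMap R T q + algebraMap R T p * z) {u : MvPolynomial (Fin 2) R}
    (hu : map (algebraMap R T) u ∈ presentationIdeal R z a b c d) :
    ∃ f₀ f₁ g₀ g₁ : MvPolynomial (Fin 2) R,
      u = C q * (g₀ * X 0 + g₁ * X 1) - f₀ * (C a * X 0 + C b * X 1) -
        f₁ * (C c * X 0 + C d * X 1) ∧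
      f₀ * X 0 + f₁ * X 1 =
        (C (a - p) * g₀ + C c * g₁) * X 0 + (C b * g₀ + C (d - p) * g₁) * X 1 := by
  obtain ⟨t₀, t₁, ht⟩ := Ideal.mem_span_pair.mp hu
  obtain ⟨f₀, g₀, rfl⟩ := exists_eq_map_add_C_mul_map hbT0 hbT1 t₀
  obtain ⟨f₁, g₁, rfl⟩ := exists_eq_map_add_C_mul_map hbT0 hbT1 t₁
  have hzC : (C z * C z : MvPolynomial (Fin 2) T) =
      map (algebraMap R T) (C q) + C z * map (algebraMap R T) (C p) := by
    rw [map_C, map_C, ← map_mul, hz, map_add, map_mul]; ring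
  have hsplit : map (algebraMap R T) (C q * (g₀ * X 0 + g₁ * X 1) -
        f₀ * (C a * X 0 + C b * X 1) - f₁ * (C c * X 0 + C d * X 1) - u) +
      C z * map (algebraMap R T) (f₀ * X 0 + f₁ * X 1 -
        ((C (a - p) * g₀ + C c * g₁) * X 0 + (C b * g₀ + C (d - p) * g₁) * X 1)) = 0 := by
    simp only [map_add, map_sub, map_mul, map_C, map_X] at ht hzC ⊢
    linear_combination ht - (map (algebraMap R T) g₀ * X 0 + map (algebraMap R T) g₁ * X 1) * hzC
  obtain ⟨h_one, h_z⟩ := eq_zero_of_map_add_C_mul_map_eq_zero hbT0 hbT1 hsplit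
  exact ⟨f₀, f₁, g₀, g₁, (sub_eq_zero.mp h_one).symm, sub_eq_zero.mp h_z⟩

theorem mem_span_quadric_of_components {p q a b c d : R}
    (hA : !![a, c; b, d] * !![a, c; b, d] =
      algebraMap R _ q + algebraMap R _ p * !![a, c; b, d])
    {u f₀ f₁ g₀ g₁ : MvPolynomial (Fin 2) R}
    (hu : u = C q * (g₀ * X 0 + g₁ * X 1) - f₀ * (C a * X 0 + C b * X 1) -
      f₁ * (C c * X 0 + C d * X 1))
    (hf : f₀ * X 0 + f₁ * X 1 =
      (C (a - p) * g₀ + C c * g₁) * X 0 + (C b * g₀ + C (d - p) * g₁) * X 1) :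
    u ∈ Ideal.span {C c * X 0 ^ 2 + C (d - a) * (X 0 * X 1) - C b * X 1 ^ 2} := by
  obtain ⟨s, hs₀, hs₁⟩ := exists_eq_mul_X_of_mul_X_eq_mul_X (i := 0) (j := 1) (by decide)
    (v := f₀ - (C (a - p) * g₀ + C c * g₁)) (w := C b * g₀ + C (d - p) * g₁ - f₁)
    (by linear_combination hf)
  have hA' := fun i j ↦ congrFun₂ hA i j
  simp only [Matrix.mul_apply, Matrix.of_apply, Matrix.cons_val', Matrix.cons_val_fin_one,
    Fin.sum_univ_two, Matrix.cons_val_zero, Matrix.cons_val_one, Matrix.add_apply,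
    Matrix.algebraMap_matrix_apply, Algebra.algebraMap_self, RingHom.id_apply, ite_mul, zero_mul,
    Finset.sum_ite_eq, Finset.mem_univ, ↓reduceIte, Fin.forall_fin_two, zero_ne_one, zero_add,
    one_ne_zero] at hA'
  obtain ⟨⟨e₀₀, e₀₁⟩, e₁₀, e₁₁⟩ := hA'
  apply_fun (C : R → MvPolynomial (Fin 2) R) at e₀₀ e₀₁ e₁₀ e₁₁
  simp only [map_add, map_mul] at e₀₀ e₀₁ e₁₀ e₁₁
  refine Ideal.mem_span_singleton'.mpr ⟨s, ?_⟩
  simp only [map_sub] at hu hs₀ hs₁ ⊢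
  linear_combination -hu + (C a * X 0 + C b * X 1) * hs₀ - (C c * X 0 + C d * X 1) * hs₁ +
    g₀ * X 0 * e₀₀ + g₀ * X 1 * e₁₀ + g₁ * X 0 * e₀₁ + g₁ * X 1 * e₁₁

end Presentation

section FreeModule

open MvPolynomial

variable {R T E} {bT : Module.Basis (Fin 2) R T} {z : T} {bE : Module.Basis (Fin 2) R E}
  {a b c d : R}

theorem toMatrixAlgEquiv_lsmul (hzx : z • bE 0 = a • bE 0 + b • bE 1)
    (hzy : z • bE 1 = c • bE 0 + d • bE 1) :
    LinearMap.toMatrixAlgEquiv bE (Algebra.lsmul R R E z) = !![a, c; b, d] := by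
  ext i j
  fin_cases i <;> fin_cases j <;> simp [LinearMap.toMatrixAlgEquiv_apply, hzx, hzy]

theorem constr_mk_X_map_smul (hzx : z • bE 0 = a • bE 0 + b • bE 1)
    (hzy : z • bE 1 = c • bE 0 + d • bE 1) (v : E) :
    bE.constr R (fun i ↦ Ideal.Quotient.mk (presentationIdeal R z a b c d) (X i)) (z • v) =
      z • bE.constr R (fun i ↦ Ideal.Quotient.mk (presentationIdeal R z a b c d) (X i)) v := by
  set f := bE.constr R (fun i ↦ Ideal.Quotient.mk (presentationIdeal R z a b c d) (X i))
  have hf : f ∘ₗ Algebra.lsmul R R E z = Algebra.lsmul R R _ z ∘ₗ f := bE.ext fun i ↦ by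
    fin_cases i
    · simpa [f, hzx] using (smul_mk_X_of_sub_mem (J := presentationIdeal R z a b c d)
        (Ideal.subset_span (Set.mem_insert _ _))).symm
    · simpa [f, hzy] using (smul_mk_X_of_sub_mem (J := presentationIdeal R z a b c d)
        (Ideal.subset_span (Set.mem_insert_of_mem _ rfl))).symm
  exact LinearMap.congr_fun hf v

noncomputable def toPresentation (hbT0 : bT 0 = 1) (hbT1 : bT 1 = z)
    (hzx : z • bE 0 = a • bE 0 + b • bE 1) (hzy : z • bE 1 = c • bE 0 + d • bE 1) :
    SymmAlg T E →ₐ[T] MvPolynomial (Fin 2) T ⧸ presentationIdeal R z a b c d :=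
  SymmAlg.lift <| LinearMap.extendScalarsOfCommute hbT0 hbT1 _ (constr_mk_X_map_smul hzx hzy)

theorem toPresentation_symMap_equivMvPolynomial_symm (hbT0 : bT 0 = 1) (hbT1 : bT 1 = z)
    (hzx : z • bE 0 = a • bE 0 + b • bE 1) (hzy : z • bE 1 = c • bE 0 + d • bE 1)
    (u : MvPolynomial (Fin 2) R) :
    toPresentation hbT0 hbT1 hzx hzy (symMap R T E ((SymmAlg.equivMvPolynomial bE).symm u)) =
      Ideal.Quotient.mk _ (map (algebraMap R T) u) := by
  have h : ((toPresentation hbT0 hbT1 hzx hzy).restrictScalars R).comp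
      ((symMap R T E).comp (SymmAlg.equivMvPolynomial bE).symm.toAlgHom) =
      (Ideal.Quotient.mkₐ R _).comp (mapAlgHom (Algebra.ofId R T)) :=
    MvPolynomial.algHom_ext fun i ↦ by
      simp [toPresentation, LinearMap.extendScalarsOfCommute]
  exact DFunLike.congr_fun h u

theorem ker_symMap_le_span_quadric (hbT0 : bT 0 = 1) (hbT1 : bT 1 = z)
    (hzx : z • bE 0 = a • bE 0 + b • bE 1) (hzy : z • bE 1 = c • bE 0 + d • bE 1) :
    RingHom.ker (symMap R T E) ≤ Ideal.span {c • (symι R E (bE 0) * symι R E (bE 0)) +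
      (d - a) • (symι R E (bE 0) * symι R E (bE 1)) - b • (symι R E (bE 1) * symι R E (bE 1))} := by
  set e := SymmAlg.equivMvPolynomial bE with he
  set q := bT.repr (z * z) 0
  set p := bT.repr (z * z) 1
  have hz : z * z = algebraMap R T q + algebraMap R T p * z :=
    eq_algebraMap_add_algebraMap_mul hbT0 hbT1 (z * z)
  -- `!![a, c; b, d]` is the matrix of `z` acting on `E`
  have hA : !![a, c; b, d] * !![a, c; b, d] =
      algebraMap R _ q + algebraMap R _ p * !![a, c; b, d] := by
    have := congrArg (fun t ↦ LinearMap.toMatrixAlgEquiv bE (Algebra.lsmul R R E t)) hz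
    simpa only [map_mul, map_add, AlgHom.commutes, AlgEquiv.commutes,
      toMatrixAlgEquiv_lsmul hzx hzy] using this
  intro w hw
  have hu : map (algebraMap R T) (e w) ∈ presentationIdeal R z a b c d := by
    rw [← Ideal.Quotient.eq_zero_iff_mem,
      ← toPresentation_symMap_equivMvPolynomial_symm hbT0 hbT1 hzx hzy, e.symm_apply_apply,
      RingHom.mem_ker.mp hw, map_zero]
  obtain ⟨f₀, f₁, g₀, g₁, hu_eq, hf⟩ :=
    exists_components_of_map_mem_presentationIdeal hbT0 hbT1 hz hu
  obtain ⟨k, hk⟩ := Ideal.mem_span_singleton'.mp (mem_span_quadric_of_components hA hu_eq hf)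
  refine Ideal.mem_span_singleton'.mpr ⟨e.symm k, ?_⟩
  rw [← e.symm_apply_apply w, ← hk, map_mul]
  congr 1
  simp only [he, map_sub, map_add, map_mul, map_pow, SymmAlg.equivMvPolynomial_symm_C,
    SymmAlg.equivMvPolynomial_symm_X, Algebra.smul_def]
  ring

end FreeModule

theorem stmt7
    (bT : Module.Basis (Fin 2) R T) (z : T) (hbT0 : bT 0 = 1) (hbT1 : bT 1 = z)
    (bE : Module.Basis (Fin 2) R E) (a b c d : R)
    (hzx : z • bE 0 = a • bE 0 + b • bE 1)
    (hzy : z • bE 1 = c • bE 0 + d • bE 1) :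
    RingHom.ker (symMap R T E) =
      Ideal.span {c • (symι R E (bE 0) * symι R E (bE 0)) +
        (d - a) • (symι R E (bE 0) * symι R E (bE 1)) -
        b • (symι R E (bE 1) * symι R E (bE 1))} :=
  le_antisymm (ker_symMap_le_span_quadric hbT0 hbT1 hzx hzy)
    (Ideal.span_le.mpr <| Set.singleton_subset_iff.mpr <| symMap_quadric_eq_zero hzx hzy)
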